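/- arXiv:1806.02027 — 3 statements merged into one kernel-verified Lean document; each statement's English description precedes it below -/
import Mathlib

section
/- Let (Ω, 𝓕, μ) be a probability space and let X, Y : Ω → ℝ be random variables with X integrable. For each n ∈ ℕ let σ(αₙ ∘ Y) denote the σ-algebra on Ω generated by the map ω ↦ αₙ(Y(ω)) (the comap of the Borel σ-algebra), and let σ(Y) denote the σ-algebra generated by Y. Then the conditional expectations E[X | σ(αₙ ∘ Y)] converge to E[X | σ(Y)] as n → ∞, both μ-almost surely and in L¹(μ). -/
/-!
Since `αₙ = αₙ ∘ αₙ₊₁`, the σ-algebras `σ(αₙ ∘ Y)` increase with `n`, and each is contained in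
`σ(Y)`. Conversely `αₙ(y) → y`, so `Y` is a pointwise limit of `σ(αₙ ∘ Y)`-measurable maps and
`σ(Y) = ⨆ₙ σ(αₙ ∘ Y)`. The claim is then Lévy's upward theorem for the martingale
`E[E[X | σ(Y)] | σ(αₙ ∘ Y)] = E[X | σ(αₙ ∘ Y)]`.
-/

open MeasureTheory Filter Topology

/-- The dyadic discretization `αₙ(y) = 2^(-n) * ⌈2^n * y⌉`. -/
noncomputable def dyadApprox (n : ℕ) (y : ℝ) : ℝ :=
  (2 : ℝ) ^ (-(n : ℤ)) * (⌈(2 : ℝ) ^ n * y⌉ : ℝ)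

theorem Int.ceil_intCast_ceil_div_natCast {k : Type*} [Field k] [LinearOrder k]
    [IsStrictOrderedRing k] [FloorRing k] (x : k) {d : ℕ} (hd : 0 < d) :
    ⌈(⌈x⌉ : k) / d⌉ = ⌈x / d⌉ := by
  have hd' : (0 : k) < d := by exact_mod_cast hd
  refine le_antisymm ?_ (Int.ceil_mono (div_le_div_of_nonneg_right (Int.le_ceil x) hd'.le))
  rw [Int.ceil_le, div_le_iff₀ hd']
  have hx : ⌈x⌉ ≤ ⌈x / d⌉ * d := by
    rw [Int.ceil_le]
    push_cast
    exact (div_le_iff₀ hd').1 (Int.le_ceil _)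
  exact_mod_cast hx

theorem MeasurableSpace.comap_le_iSup_comap_of_tendsto {α β ι : Type*} [TopologicalSpace β]
    [TopologicalSpace.PseudoMetrizableSpace β] {mβ : MeasurableSpace β} [BorelSpace β]
    {f : ι → α → β} {g : α → β} (u : Filter ι) [NeBot u] [IsCountablyGenerated u]
    (lim : ∀ x, Tendsto (fun i => f i x) u (𝓝 (g x))) :
    mβ.comap g ≤ ⨆ i, mβ.comap (f i) := by
  let _ : MeasurableSpace α := ⨆ i, mβ.comap (f i)
  have hf (i : ι) : Measurable (f i) :=
    (comap_measurable (f i)).mono (le_iSup (fun i => mβ.comap (f i)) i) le_rfl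
  exact (measurable_of_tendsto_metrizable' u hf (tendsto_pi_nhds.2 lim)).comap_le

section LevyUpward

variable {Ω : Type*} {m0 : MeasurableSpace Ω} {μ : Measure Ω} [IsFiniteMeasure μ]
  {ℱ : Filtration ℕ m0} {X : Ω → ℝ}

theorem condExp_condExp_iSup (n : ℕ) : μ[μ[X | ⨆ n, ℱ n] | ℱ n] =ᵐ[μ] μ[X | ℱ n] :=
  condExp_condExp_of_le (le_iSup _ n) (iSup_le ℱ.le)

theorem tendsto_ae_condExp_iSup :
    ∀ᵐ ω ∂μ, Tendsto (fun n => (μ[X | ℱ n]) ω) atTop (𝓝 ((μ[X | ⨆ n, ℱ n]) ω)) := by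
  filter_upwards [integrable_condExp.tendsto_ae_condExp stronglyMeasurable_condExp,
    ae_all_iff.2 condExp_condExp_iSup] with ω hω htower
  exact hω.congr htower

theorem tendsto_eLpNorm_condExp_iSup :
    Tendsto (fun n => eLpNorm (μ[X | ℱ n] - μ[X | ⨆ n, ℱ n]) 1 μ) atTop (𝓝 0) :=
  (integrable_condExp.tendsto_eLpNorm_condExp stronglyMeasurable_condExp).congr fun n =>
    eLpNorm_congr_ae ((condExp_condExp_iSup n).sub EventuallyEq.rfl)

end LevyUpward

theorem dyadApprox_eq (n : ℕ) (y : ℝ) : dyadApprox n y = ⌈2 ^ n * y⌉ / 2 ^ n := by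
  rw [dyadApprox, zpow_neg, zpow_natCast, inv_mul_eq_div]

theorem measurable_dyadApprox (n : ℕ) : Measurable (dyadApprox n) := by
  simp only [funext (dyadApprox_eq n)]
  fun_prop

theorem dyadApprox_dyadApprox_succ (n : ℕ) (y : ℝ) :
    dyadApprox n (dyadApprox (n + 1) y) = dyadApprox n y := by
  have hhalf : (2 : ℝ) ^ n * (⌈2 ^ (n + 1) * y⌉ / 2 ^ (n + 1)) =
      (⌈2 ^ (n + 1) * y⌉ : ℝ) / (2 : ℕ) := by
    field_simp
    ring
  rw [dyadApprox_eq, dyadApprox_eq, hhalf, Int.ceil_intCast_ceil_div_natCast _ two_pos,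
    dyadApprox_eq]
  congr 3
  field_simp
  ring

theorem tendsto_dyadApprox (y : ℝ) : Tendsto (fun n => dyadApprox n y) atTop (𝓝 y) := by
  have hupper : Tendsto (fun n : ℕ => y + 1 / 2 ^ n) atTop (𝓝 y) := by
    simpa using tendsto_const_nhds.add (tendsto_inv_atTop_zero.comp
      (tendsto_pow_atTop_atTop_of_one_lt (one_lt_two (α := ℝ))))
  refine tendsto_of_tendsto_of_tendsto_of_le_of_le tendsto_const_nhds hupper (fun n => ?_)
    (fun n => ?_)
  · rw [dyadApprox_eq, le_div_iff₀ (by positivity), mul_comm]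
    exact Int.le_ceil _
  · rw [dyadApprox_eq, div_le_iff₀ (by positivity), add_mul, one_div_mul_cancel (by positivity),
      mul_comm]
    exact (Int.ceil_lt_add_one _).le

section Filtration

variable {Ω : Type*} [MeasurableSpace Ω]

noncomputable def dyadFiltration (Y : Ω → ℝ) (hY : Measurable Y) : Filtration ℕ ‹_› where
  seq n := MeasurableSpace.comap (fun ω => dyadApprox n (Y ω)) (borel ℝ)
  mono' := monotone_nat_of_le_succ fun n =>
    MeasurableSpace.comap_le_comap_of_eq_comp _ (measurable_dyadApprox n)
      (funext fun ω => (dyadApprox_dyadApprox_succ n (Y ω)).symm)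
  le' n := ((measurable_dyadApprox n).comp hY).comap_le

theorem iSup_dyadFiltration (Y : Ω → ℝ) (hY : Measurable Y) :
    ⨆ n, dyadFiltration Y hY n = MeasurableSpace.comap Y (borel ℝ) :=
  le_antisymm
    (iSup_le fun n => MeasurableSpace.comap_le_comap_of_eq_comp _ (measurable_dyadApprox n) rfl)
    (MeasurableSpace.comap_le_iSup_comap_of_tendsto atTop fun ω => tendsto_dyadApprox (Y ω))

end Filtration

theorem condexp_dyadApprox_tendsto_general {Ω : Type*} [MeasurableSpace Ω] (μ : Measure Ω)
    [IsProbabilityMeasure μ] (X Y : Ω → ℝ) (hY : Measurable Y) :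
    (∀ᵐ ω ∂μ, Tendsto
        (fun n : ℕ => (μ[X | MeasurableSpace.comap (fun ω' => dyadApprox n (Y ω')) (borel ℝ)]) ω)
        atTop (𝓝 ((μ[X | MeasurableSpace.comap Y (borel ℝ)]) ω))) ∧
    Tendsto (fun n : ℕ =>
        eLpNorm ((μ[X | MeasurableSpace.comap (fun ω' => dyadApprox n (Y ω')) (borel ℝ)]) -
          (μ[X | MeasurableSpace.comap Y (borel ℝ)])) 1 μ) atTop (𝓝 0) := by
  rw [← iSup_dyadFiltration Y hY]
  exact ⟨tendsto_ae_condExp_iSup (ℱ := dyadFiltration Y hY),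
    tendsto_eLpNorm_condExp_iSup (ℱ := dyadFiltration Y hY)⟩

/-- Conditional expectations given the discretized observations `αₙ ∘ Y` converge
to the conditional expectation given `Y`, both a.s. and in L¹. -/
theorem condexp_dyadApprox_tendsto {Ω : Type*} [MeasurableSpace Ω] (μ : Measure Ω)
    [IsProbabilityMeasure μ] (X Y : Ω → ℝ) (hX : Integrable X μ) (hY : Measurable Y) :
    (∀ᵐ ω ∂μ, Tendsto
        (fun n : ℕ => (μ[X | MeasurableSpace.comap (fun ω' => dyadApprox n (Y ω')) (borel ℝ)]) ω)
        atTop (𝓝 ((μ[X | MeasurableSpace.comap Y (borel ℝ)]) ω))) ∧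
    Tendsto (fun n : ℕ =>
        eLpNorm ((μ[X | MeasurableSpace.comap (fun ω' => dyadApprox n (Y ω')) (borel ℝ)]) -
          (μ[X | MeasurableSpace.comap Y (borel ℝ)])) 1 μ) atTop (𝓝 0) :=
  condexp_dyadApprox_tendsto_general μ X Y hY
end

section
/- Let M ∈ ℕ, and for each i ∈ {1,…,M} let νᵢ be a finite Borel measure on ℝ and yᵢ ∈ ℝ. Let D = {i : νᵢ({yᵢ}) = 0} and d = |D|. Assume that for each i ∈ D there exist δᵢ > 0 and a nonnegative measurable function fᵢ : ℝ → ℝ, continuous at yᵢ with fᵢ(yᵢ) > 0, such that the restriction of νᵢ to (yᵢ − δᵢ, yᵢ + δᵢ) equals the restriction of (Lebesgue measure with density fᵢ) to that interval. Set w = (∏_{i ∉ D} νᵢ({yᵢ})) · (∏_{i ∈ D} fᵢ(yᵢ)). Then w > 0 and the lexicographic limit holds: (∏_{i=1}^{M} νᵢ(Iₙ(yᵢ))) / (w · 2^{−dn}) → 1 as n → ∞. -/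
/-!
At a point mass, the dyadic cells `Iₙ(y)` shrink to `{y}` inside the intervals
`[y - 2⁻ⁿ, y + 2⁻ⁿ]`, so continuity from above of the measure gives `ν(Iₙ(y)) → ν{y}`.
Where there is no point mass, `ν` has a density `f` near `y` that is continuous at `y`, so
the first-order estimate `∫_{Iₙ(y)} f = 2⁻ⁿ f(y) + o(2⁻ⁿ)` gives
`ν(Iₙ(y)) / 2⁻ⁿ → f(y)`. The normalized product then splits into `M` factors each tending to `1`.
-/

open MeasureTheory Filter Topology

/-- The dyadic cell `Iₙ(y) = (αₙ(y) - 2^(-n), αₙ(y)]`. -/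
noncomputable def dyadCell (n : ℕ) (y : ℝ) : Set ℝ :=
  Set.Ioc (dyadApprox n y - (2 : ℝ) ^ (-(n : ℤ))) (dyadApprox n y)

open Set

lemma mem_dyadCell (n : ℕ) (y : ℝ) : y ∈ dyadCell n y := by
  have hy : y = (2 : ℝ) ^ (-(n : ℤ)) * (2 ^ n * y) := by simp [zpow_neg]
  have hpos : (0 : ℝ) < 2 ^ (-(n : ℤ)) := by positivity
  constructor
  · rw [dyadApprox, ← mul_sub_one, hy, mul_lt_mul_iff_right₀ hpos, ← hy]
    linarith [Int.ceil_lt_add_one ((2 : ℝ) ^ n * y)]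
  · rw [dyadApprox, hy, mul_le_mul_iff_right₀ hpos, ← hy]
    exact Int.le_ceil _

lemma dyadCell_subset_Icc (n : ℕ) (y : ℝ) :
    dyadCell n y ⊆ Icc (y - 2 ^ (-(n : ℤ))) (y + 2 ^ (-(n : ℤ))) := fun _ hx =>
  ⟨by linarith [hx.1, (mem_dyadCell n y).2], by linarith [hx.2, (mem_dyadCell n y).1]⟩

lemma volume_real_dyadCell (n : ℕ) (y : ℝ) : volume.real (dyadCell n y) = 2 ^ (-(n : ℤ)) := by
  simp [dyadCell, measureReal_def]

lemma tendsto_two_zpow_neg_nhdsGT :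
    Tendsto (fun n : ℕ => (2 : ℝ) ^ (-(n : ℤ))) atTop (𝓝[>] 0) := by
  refine tendsto_nhdsWithin_of_tendsto_nhds_of_eventually_within _ ?_
    (.of_forall fun n => (by positivity : (0 : ℝ) < _))
  simpa [zpow_neg, Function.comp_def] using
    tendsto_inv_atTop_zero.comp (tendsto_pow_atTop_atTop_of_one_lt one_lt_two)

lemma tendsto_dyadCell_smallSets (y : ℝ) :
    Tendsto (dyadCell · y) atTop (𝓝 y).smallSets :=
  ((tendsto_closedBall_smallSets y).comp
    (tendsto_nhds_of_tendsto_nhdsWithin tendsto_two_zpow_neg_nhdsGT)).smallSets_mono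
    (.of_forall fun n => by
      simpa only [Function.comp_apply, Real.closedBall_eq_Icc] using dyadCell_subset_Icc n y)

lemma tendsto_measure_dyadCell (ν : Measure ℝ) [IsFiniteMeasureOnCompacts ν] (y : ℝ) :
    Tendsto (fun n => ν (dyadCell n y)) atTop (𝓝 (ν {y})) :=
  tendsto_of_tendsto_of_tendsto_of_le_of_le tendsto_const_nhds
    ((tendsto_measure_Icc_nhdsWithin_right' ν y).comp tendsto_two_zpow_neg_nhdsGT)
    (fun n => measure_mono (singleton_subset_iff.2 (mem_dyadCell n y)))
    (fun n => measure_mono (dyadCell_subset_Icc n y))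

section Density

variable {X : Type*} [MeasurableSpace X] {μ ν : Measure X} {f : X → ℝ}

lemma ContinuousAt.tendsto_setIntegral_div_measureReal [TopologicalSpace X]
    [OpensMeasurableSpace X] [IsLocallyFiniteMeasure μ] {x : X}
    (hfx : ContinuousAt f x) (hfm : Measurable f) {ι : Type*} {l : Filter ι} {s : ι → Set X}
    (hs : Tendsto s l (𝓝 x).smallSets) (hμs : ∀ᶠ i in l, μ.real (s i) ≠ 0) :
    Tendsto (fun i => (∫ t in s i, f t ∂μ) / μ.real (s i)) l (𝓝 (f x)) := by
  have h := (hfx.integral_sub_linear_isLittleO_ae (μ := μ)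
    hfm.stronglyMeasurable.stronglyMeasurableAtFilter hs).tendsto_div_nhds_zero
  rw [← tendsto_sub_nhds_zero_iff]
  refine h.congr' (hμs.mono fun i hi => ?_)
  rw [sub_div, smul_eq_mul, mul_div_cancel_left₀ _ hi]

lemma measureReal_eq_setIntegral_of_restrict_eq_withDensity {U s : Set X}
    (hνU : ν.restrict U = (μ.withDensity fun t => ENNReal.ofReal (f t)).restrict U)
    (hfm : Measurable f) (hf0 : ∀ t, 0 ≤ f t) (hsU : s ⊆ U) (hs : MeasurableSet s) :
    ν.real s = ∫ t in s, f t ∂μ := by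
  have hνs : ν s = ∫⁻ t in s, ENNReal.ofReal (f t) ∂μ := by
    rw [← Measure.restrict_eq_self ν hsU, hνU, Measure.restrict_eq_self _ hsU,
      withDensity_apply _ hs]
  rw [measureReal_def, hνs, integral_eq_lintegral_of_nonneg_ae (.of_forall hf0)
    hfm.aestronglyMeasurable]

end Density

lemma tendsto_measureReal_dyadCell_div_atom (ν : Measure ℝ) [IsFiniteMeasureOnCompacts ν] {y : ℝ}
    (hy : ν {y} ≠ 0) :
    Tendsto (fun n => ν.real (dyadCell n y) / ν.real {y}) atTop (𝓝 1) := by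
  have hfin : ν {y} ≠ ⊤ := isCompact_singleton.measure_ne_top
  rw [← div_self (ENNReal.toReal_ne_zero.2 ⟨hy, hfin⟩)]
  exact ((ENNReal.tendsto_toReal hfin).comp (tendsto_measure_dyadCell ν y)).div_const _

lemma tendsto_measureReal_dyadCell_div_density {ν : Measure ℝ} {f : ℝ → ℝ} {y : ℝ} {U : Set ℝ}
    (hU : U ∈ 𝓝 y)
    (hνU : ν.restrict U = (volume.withDensity fun t => ENNReal.ofReal (f t)).restrict U)
    (hfm : Measurable f) (hf0 : ∀ t, 0 ≤ f t) (hfy : ContinuousAt f y) (hfy0 : f y ≠ 0) :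
    Tendsto (fun n : ℕ => ν.real (dyadCell n y) / (f y * 2 ^ (-(n : ℤ)))) atTop (𝓝 1) := by
  have hint := hfy.tendsto_setIntegral_div_measureReal (μ := volume) hfm
    (tendsto_dyadCell_smallSets y)
    (.of_forall fun n => by rw [volume_real_dyadCell]; positivity)
  have hsub : ∀ᶠ n in atTop, dyadCell n y ⊆ U :=
    (tendsto_dyadCell_smallSets y).eventually (eventually_smallSets_subset.2 hU)
  rw [← div_self hfy0]
  refine (hint.div_const (f y)).congr' (hsub.mono fun n hn => ?_)
  rw [volume_real_dyadCell, ← measureReal_eq_setIntegral_of_restrict_eq_withDensity hνU hfm hf0 hn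
    measurableSet_Ioc, div_div, mul_comm (2 ^ _)]

open Classical in
/-- Lexicographic limit for a product of finite measures of dyadic cells:
with `D` the set of indices at which the observation carries no point mass,
`d = |D|`, and `w` the product of the point masses off `D` and the densities on `D`,
we have `w > 0` and `(∏ i, νᵢ(Iₙ(yᵢ))) / (w * 2^(-d*n)) → 1`. -/
theorem lexicographic_limit (M : ℕ) (ν : Fin M → Measure ℝ) [∀ i, IsFiniteMeasure (ν i)]
    (y : Fin M → ℝ) (δ : Fin M → ℝ) (f : Fin M → ℝ → ℝ)
    (D : Finset (Fin M)) (hD : D = Finset.univ.filter fun i => ν i {y i} = 0)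
    (d : ℕ) (hd : d = D.card)
    (hmix : ∀ i ∈ D, 0 < δ i ∧ Measurable (f i) ∧ (∀ t, 0 ≤ f i t) ∧
      ContinuousAt (f i) (y i) ∧ 0 < f i (y i) ∧
      (ν i).restrict (Set.Ioo (y i - δ i) (y i + δ i)) =
        (volume.withDensity fun t => ENNReal.ofReal (f i t)).restrict
          (Set.Ioo (y i - δ i) (y i + δ i)))
    (w : ℝ) (hw : w = (∏ i ∈ Dᶜ, (ν i {y i}).toReal) * ∏ i ∈ D, f i (y i)) :
    0 < w ∧
    Tendsto (fun n : ℕ =>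
        (∏ i, (ν i (dyadCell n (y i))).toReal) / (w * (2 : ℝ) ^ (-(d * n : ℤ))))
      atTop (𝓝 1) := by
  have hatom : ∀ i ∉ D, ν i {y i} ≠ 0 := fun i hi => by simpa [hD] using hi
  refine ⟨hw ▸ mul_pos (Finset.prod_pos fun i hi => ENNReal.toReal_pos
    (hatom i (Finset.mem_compl.1 hi)) (measure_ne_top _ _))
    (Finset.prod_pos fun i hi => (hmix i hi).2.2.2.2.1), ?_⟩
  let c (n : ℕ) (i : Fin M) : ℝ :=
    if i ∈ D then f i (y i) * 2 ^ (-(n : ℤ)) else (ν i {y i}).toReal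
  have hc (n : ℕ) : w * (2 : ℝ) ^ (-(d * n : ℤ)) = ∏ i, c n i := by
    rw [← Finset.prod_mul_prod_compl D, mul_comm, hw, Finset.prod_congr rfl fun i hi => if_pos hi,
      Finset.prod_congr rfl fun i hi => if_neg (Finset.mem_compl.1 hi), Finset.prod_mul_distrib,
      Finset.prod_const, ← hd, ← zpow_natCast, ← zpow_mul, mul_assoc]
    ring_nf
  have hfactor (i : Fin M) :
      Tendsto (fun n => (ν i).real (dyadCell n (y i)) / c n i) atTop (𝓝 1) := by
    by_cases hi : i ∈ D
    · obtain ⟨hδ, hfm, hf0, hfy, hfy0, hνU⟩ := hmix i hi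
      simpa only [c, if_pos hi] using tendsto_measureReal_dyadCell_div_density
        (Ioo_mem_nhds (by linarith) (by linarith)) hνU hfm hf0 hfy hfy0.ne'
    · simp only [c, if_neg hi]
      exact tendsto_measureReal_dyadCell_div_atom (ν i) (hatom i hi)
  simp_rw [hc, ← Finset.prod_div_distrib]
  simpa [measureReal_def] using tendsto_finsetProd Finset.univ fun i _ => hfactor i
end

section
/- Let (𝒳, Σ) be a measurable space, μ a probability measure on 𝒳, κ a Markov kernel from 𝒳 to ℝ (with the Borel σ-algebra), and let π = μ ⊗ₘ κ be the composition-product probability measure on 𝒳 × ℝ. Let A ⊆ ℝ be a Borel set with π(𝒳 × A) > 0, and let f : 𝒳 → ℝ be a bounded measurable function. Let ξ₁, ξ₂, … be an i.i.d. sequence of 𝒳-valued random variables with common distribution μ, defined on some probability space. Then, almost surely, (∑_{i=1}^{K} κ(ξᵢ, A)·f(ξᵢ)) / (∑_{i=1}^{K} κ(ξᵢ, A)) → (∫_{𝒳 × A} f(x) dπ(x, y)) / π(𝒳 × A) as K → ∞, i.e., the importance-sampling estimator with weights κ(·, A) converges almost surely to the conditional expectation E_π[f(X) | Y ∈ A].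 -/
/-!
By the strong law of large numbers, after dividing numerator and denominator by `K`,
the numerator tends to `∫ κ(x, A) f(x) dμ` and the denominator to `∫ κ(x, A) dμ`,
which is positive.
Disintegrating `π = μ ⊗ₘ κ` over the first coordinate identifies these two integrals with
`∫_{𝒳 × A} f(x) dπ` and `π(𝒳 × A)`.
-/

open MeasureTheory ProbabilityTheory Filter Topology

theorem tendsto_sum_div_sum_of_tendsto_averages {a b : ℕ → ℝ} {α β : ℝ}
    (ha : Tendsto (fun n : ℕ => (∑ i ∈ Finset.range n, a i) / n) atTop (𝓝 α))
    (hb : Tendsto (fun n : ℕ => (∑ i ∈ Finset.range n, b i) / n) atTop (𝓝 β))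
    (hβ : β ≠ 0) :
    Tendsto (fun n => (∑ i ∈ Finset.range n, a i) / ∑ i ∈ Finset.range n, b i) atTop
      (𝓝 (α / β)) := by
  refine (ha.div hb hβ).congr' ?_
  filter_upwards [eventually_ge_atTop 1] with n hn
  exact div_div_div_cancel_right₀ (by positivity) _ _

theorem ae_tendsto_average_comp {Ω 𝒳 : Type*} [MeasurableSpace Ω] [MeasurableSpace 𝒳]
    {P : Measure Ω} {μ : Measure 𝒳} {ξ : ℕ → Ω → 𝒳} (hξm : ∀ i, Measurable (ξ i))
    (hindep : Pairwise fun i j => IndepFun (ξ i) (ξ j) P)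
    (hident : ∀ i, P.map (ξ i) = μ)
    {h : 𝒳 → ℝ} (hh : Measurable h) (hint : Integrable h μ) :
    ∀ᵐ ω ∂P, Tendsto (fun n : ℕ => (∑ i ∈ Finset.range n, h (ξ i ω)) / n) atTop
      (𝓝 (∫ x, h x ∂μ)) := by
  rw [← hident 0] at hint ⊢
  rw [integral_map (hξm 0).aemeasurable hh.aestronglyMeasurable]
  refine strong_law_ae_real (fun i ω => h (ξ i ω)) (hint.comp_measurable (hξm 0))
    (fun i j hij => (hindep hij).comp hh hh) fun i => ?_
  exact IdentDistrib.comp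
    ⟨(hξm i).aemeasurable, (hξm 0).aemeasurable, by rw [hident i, hident 0]⟩ hh

section Kernel

variable {𝒳 𝒴 : Type*} [MeasurableSpace 𝒳] [MeasurableSpace 𝒴] {μ : Measure 𝒳}
  {κ : Kernel 𝒳 𝒴} {A : Set 𝒴}

theorem integrable_kernel_apply_toReal [IsFiniteMeasure μ] [IsFiniteKernel κ]
    (hA : MeasurableSet A) : Integrable (fun x => (κ x A).toReal) μ := by
  refine .of_bound (κ.measurable_coe hA).ennreal_toReal.aestronglyMeasurable κ.bound.toReal
    (ae_of_all _ fun x => ?_)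
  rw [Real.norm_eq_abs, abs_of_nonneg ENNReal.toReal_nonneg]
  exact ENNReal.toReal_mono κ.bound_ne_top (κ.measure_le_bound x A)

theorem integral_kernel_apply_toReal [SFinite μ] [IsFiniteKernel κ] (hA : MeasurableSet A) :
    ∫ x, (κ x A).toReal ∂μ = ((μ ⊗ₘ κ) (Set.univ ×ˢ A)).toReal := by
  rw [Measure.compProd_apply_prod MeasurableSet.univ hA, Measure.restrict_univ,
    integral_toReal (κ.measurable_coe hA).aemeasurable (ae_of_all _ fun x => measure_lt_top _ _)]

theorem setIntegral_compProd_univ_prod_comp_fst [SFinite μ] [IsSFiniteKernel κ]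
    (hA : MeasurableSet A) {f : 𝒳 → ℝ}
    (hf : IntegrableOn (fun p => f p.1) (Set.univ ×ˢ A) (μ ⊗ₘ κ)) :
    ∫ p in Set.univ ×ˢ A, f p.1 ∂(μ ⊗ₘ κ) = ∫ x, (κ x A).toReal * f x ∂μ := by
  rw [Measure.setIntegral_compProd MeasurableSet.univ hA hf, Measure.restrict_univ]
  simp_rw [setIntegral_const, smul_eq_mul, Measure.real]

end Kernel

theorem importance_sampling_conditional_event_general
    {𝒳 : Type*} [MeasurableSpace 𝒳] (μ : Measure 𝒳) [IsProbabilityMeasure μ]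
    (κ : Kernel 𝒳 ℝ) [IsMarkovKernel κ]
    (A : Set ℝ) (hA : MeasurableSet A)
    (hApos : 0 < (μ ⊗ₘ κ) (Set.univ ×ˢ A))
    (f : 𝒳 → ℝ) (hf : Measurable f) (hfbdd : ∃ C : ℝ, ∀ x, |f x| ≤ C)
    {Ω : Type*} [MeasurableSpace Ω] (P : Measure Ω)
    (ξ : ℕ → Ω → 𝒳) (hξm : ∀ i, Measurable (ξ i))
    (hindep : iIndepFun ξ P)
    (hident : ∀ i, P.map (ξ i) = μ) :
    ∀ᵐ ω ∂P, Tendsto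
      (fun K : ℕ => (∑ i ∈ Finset.range K, (κ (ξ i ω) A).toReal * f (ξ i ω)) /
        ∑ i ∈ Finset.range K, (κ (ξ i ω) A).toReal)
      atTop
      (𝓝 ((∫ p in Set.univ ×ˢ A, f p.1 ∂(μ ⊗ₘ κ)) /
        ((μ ⊗ₘ κ) (Set.univ ×ˢ A)).toReal)) := by
  obtain ⟨C, hC⟩ := hfbdd
  have hwm : Measurable fun x => (κ x A).toReal := (κ.measurable_coe hA).ennreal_toReal
  have hwint := integrable_kernel_apply_toReal (μ := μ) (κ := κ) hA
  have hwfint : Integrable (fun x => (κ x A).toReal * f x) μ :=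
    hwint.mul_bdd hf.aestronglyMeasurable (c := C) (ae_of_all _ hC)
  have hfint : IntegrableOn (fun p : 𝒳 × ℝ => f p.1) (Set.univ ×ˢ A) (μ ⊗ₘ κ) :=
    (Integrable.of_bound (hf.comp measurable_fst).aestronglyMeasurable C
      (ae_of_all _ fun p => hC p.1)).integrableOn
  have hpos : ∫ x, (κ x A).toReal ∂μ ≠ 0 := by
    rw [integral_kernel_apply_toReal hA]
    exact (ENNReal.toReal_pos hApos.ne' (measure_ne_top _ _)).ne'
  have hpairwise : Pairwise fun i j => IndepFun (ξ i) (ξ j) P :=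
    fun i j hij => hindep.indepFun hij
  rw [setIntegral_compProd_univ_prod_comp_fst hA hfint, ← integral_kernel_apply_toReal hA]
  filter_upwards [ae_tendsto_average_comp hξm hpairwise hident (hwm.mul hf) hwfint,
    ae_tendsto_average_comp hξm hpairwise hident hwm hwint] with ω hnum hden
  exact tendsto_sum_div_sum_of_tendsto_averages hnum hden hpos

/-- Importance sampling with weights `κ(·, A)` converges almost surely to the
conditional expectation `E_π[f(X) | Y ∈ A]`, where `π = μ ⊗ₘ κ`. -/
theorem importance_sampling_conditional_event
    {𝒳 : Type*} [MeasurableSpace 𝒳] (μ : Measure 𝒳) [IsProbabilityMeasure μ]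
    (κ : Kernel 𝒳 ℝ) [IsMarkovKernel κ]
    (A : Set ℝ) (hA : MeasurableSet A)
    (hApos : 0 < (μ ⊗ₘ κ) (Set.univ ×ˢ A))
    (f : 𝒳 → ℝ) (hf : Measurable f) (hfbdd : ∃ C : ℝ, ∀ x, |f x| ≤ C)
    {Ω : Type*} [MeasurableSpace Ω] (P : Measure Ω) [IsProbabilityMeasure P]
    (ξ : ℕ → Ω → 𝒳) (hξm : ∀ i, Measurable (ξ i))
    (hindep : iIndepFun ξ P)
    (hident : ∀ i, P.map (ξ i) = μ) :
    ∀ᵐ ω ∂P, Tendsto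
      (fun K : ℕ => (∑ i ∈ Finset.range K, (κ (ξ i ω) A).toReal * f (ξ i ω)) /
        ∑ i ∈ Finset.range K, (κ (ξ i ω) A).toReal)
      atTop
      (𝓝 ((∫ p in Set.univ ×ˢ A, f p.1 ∂(μ ⊗ₘ κ)) /
        ((μ ⊗ₘ κ) (Set.univ ×ˢ A)).toReal)) :=
  importance_sampling_conditional_event_general μ κ A hA hApos f hf hfbdd P ξ hξm hindep hident
end
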